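/- Let N_ℝ be a finite-dimensional real vector space with dual M_ℝ. Let e₁, …, e_k ∈ N_ℝ and a₁, …, a_k ∈ ℝ with all a_i ≥ 0. Define □ = {m ∈ M_ℝ : ⟨m, e_i⟩ + a_i ≥ 0 for all i} and U = {e ∈ N_ℝ : ⟨m, e⟩ ≥ −1 for all m ∈ □}. Then U = conv({0} ∪ {e_i/a_i : a_i > 0}) + Σ_{i : a_i = 0} ℝ_{≥0} e_i, where the last term is the convex cone generated by the e_i with a_i = 0. -/

import Mathlib

/-!
The inclusion `⊇` is a check on generators: a functional in `□` is `≥ -1` at `0` and at each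
`e i / a i`, hence on their convex hull, and `≥ 0` at each `e i` with `a i = 0`, hence on their cone.
For `⊆`, the right-hand side `K` is convex, contains `0`, and is closed, being a polytope plus a
finitely generated cone. If `x ∉ K`, Hahn–Banach separation gives a functional `f` with
`f x < -1 < f` on `K`; evaluating `f` at `e i / a i` (when `a i > 0`) and along the rays `t • e i`
(when `a i = 0`) shows `f ∈ □`, contradicting `x ∈ U`.
-/

/-- The convex cone generated by a set `s`: all finite nonnegative linear
combinations of elements of `s`. -/
def coneHull {V : Type*} [AddCommGroup V] [Module ℝ V] (s : Set V) : Set V :=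
  {x | ∃ (n : ℕ) (c : Fin n → ℝ) (v : Fin n → V),
    (∀ i, 0 ≤ c i) ∧ (∀ i, v i ∈ s) ∧ x = ∑ i, c i • v i}

open Pointwise

section ConeHull

variable {V : Type*} [AddCommGroup V] [Module ℝ V] {s : Set V}

theorem coneHull_eq_hull (s : Set V) : coneHull s = PointedCone.hull ℝ s := by
  ext x
  rw [SetLike.mem_coe, Submodule.mem_span_set']
  constructor
  · rintro ⟨n, c, v, hc, hv, rfl⟩
    exact ⟨n, fun i => ⟨c i, hc i⟩, fun i => ⟨v i, hv i⟩, rfl⟩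
  · rintro ⟨n, c, v, rfl⟩
    exact ⟨n, fun i => c i, fun i => v i, fun i => (c i).2, fun i => (v i).2, rfl⟩

theorem zero_mem_coneHull (s : Set V) : (0 : V) ∈ coneHull s := by
  rw [coneHull_eq_hull]
  exact zero_mem _

theorem smul_mem_coneHull_of_mem {r : ℝ} (hr : 0 ≤ r) {x : V} (hx : x ∈ s) : r • x ∈ coneHull s := by
  rw [coneHull_eq_hull]
  exact PointedCone.smul_mem _ hr (PointedCone.subset_hull hx)

theorem convex_coneHull (s : Set V) : Convex ℝ (coneHull s) := by
  rw [coneHull_eq_hull]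
  exact PointedCone.convex _

theorem LinearMap.nonneg_of_mem_coneHull {f : V →ₗ[ℝ] ℝ} (hf : ∀ v ∈ s, 0 ≤ f v) {x : V}
    (hx : x ∈ coneHull s) : 0 ≤ f x := by
  rw [coneHull_eq_hull] at hx
  exact Submodule.span_le (p := (PointedCone.positive ℝ ℝ).comap f) |>.2 hf hx

end ConeHull

section Caratheodory

theorem exists_sub_mul_nonneg_and_eq_zero {ι : Type*} [Fintype ι] {c g : ι → ℝ}
    (hc : ∀ i, 0 ≤ c i) (hg : ∃ i, 0 < g i) :
    ∃ (r : ℝ) (j : ι), (∀ i, 0 ≤ c i - r * g i) ∧ c j - r * g j = 0 := by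
  classical
  -- `r` is the least ratio `c i / g i` over the `i` with `g i > 0`.
  obtain ⟨i₁, hi₁⟩ := hg
  obtain ⟨j, hj, hmin⟩ := (Finset.univ.filter fun i => 0 < g i).exists_min_image
    (fun i => c i / g i) ⟨i₁, by simpa using hi₁⟩
  rw [Finset.mem_filter] at hj
  refine ⟨c j / g j, j, fun i => ?_, by rw [div_mul_cancel₀ _ hj.2.ne', sub_self]⟩
  rcases le_or_gt (g i) 0 with hgi | hgi
  · nlinarith [hc i, div_nonneg (hc j) hj.2.le]
  · have := hmin i (by simpa using hgi)
    rw [le_div_iff₀ hgi] at this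
    linarith

variable {V : Type*} [AddCommGroup V] [Module ℝ V] {s : Set V}

-- Move along a linear relation among the `v i` until a coefficient vanishes.
theorem exists_nonneg_sum_succAbove_eq_of_not_linearIndependent {m : ℕ}
    {c : Fin (m + 1) → ℝ} {v : Fin (m + 1) → V} (hc : ∀ i, 0 ≤ c i)
    (hv : ¬LinearIndependent ℝ v) :
    ∃ (j : Fin (m + 1)) (c' : Fin m → ℝ), (∀ i, 0 ≤ c' i) ∧
      ∑ i, c' i • v (j.succAbove i) = ∑ i, c i • v i := by
  obtain ⟨g, hg, i₀, hi₀⟩ := Fintype.not_linearIndependent_iff.1 hv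
  obtain ⟨g, hg, hpos⟩ : ∃ g : Fin (m + 1) → ℝ, ∑ i, g i • v i = 0 ∧ ∃ i, 0 < g i := by
    rcases hi₀.lt_or_gt with hneg | hpos
    · exact ⟨-g, by simp [neg_smul, hg], i₀, by simpa using hneg⟩
    · exact ⟨g, hg, i₀, hpos⟩
  obtain ⟨r, j, hnonneg, hzero⟩ := exists_sub_mul_nonneg_and_eq_zero hc hpos
  refine ⟨j, fun i => c (j.succAbove i) - r * g (j.succAbove i), fun i => hnonneg _, ?_⟩
  have hsum : ∑ i, (c i - r * g i) • v i = ∑ i, c i • v i := by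
    simp only [sub_smul, mul_smul, Finset.sum_sub_distrib, ← Finset.smul_sum, hg, smul_zero,
      sub_zero]
  rw [← hsum, Fin.sum_univ_succAbove _ j, hzero, zero_smul, zero_add]

theorem exists_linearIndependent_of_mem_coneHull {x : V} (hx : x ∈ coneHull s) :
    ∃ (n : ℕ) (c : Fin n → ℝ) (v : Fin n → V), (∀ i, 0 ≤ c i) ∧ (∀ i, v i ∈ s) ∧
      LinearIndependent ℝ v ∧ x = ∑ i, c i • v i := by
  classical
  let Rep (n : ℕ) : Prop := ∃ (c : Fin n → ℝ) (v : Fin n → V), (∀ i, 0 ≤ c i) ∧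
    (∀ i, v i ∈ s) ∧ x = ∑ i, c i • v i
  have hex : ∃ n, Rep n := hx
  obtain ⟨n, ⟨c, v, hc, hvs, hxv⟩, hmin⟩ : ∃ n, Rep n ∧ ∀ m < n, ¬Rep m :=
    ⟨Nat.find hex, Nat.find_spec hex, fun _ => Nat.find_min hex⟩
  refine ⟨n, c, v, hc, hvs, ?_, hxv⟩
  cases n with
  | zero => exact linearIndependent_empty_type
  | succ m =>
    by_contra hli
    obtain ⟨j, c', hc', hsum⟩ := exists_nonneg_sum_succAbove_eq_of_not_linearIndependent hc hli
    exact hmin m m.lt_succ_self ⟨c', v ∘ j.succAbove, hc', fun i => hvs _, hxv.trans hsum.symm⟩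

end Caratheodory

section Topology

variable {E : Type*} [AddCommGroup E] [Module ℝ E] [TopologicalSpace E]
  [IsTopologicalAddGroup E] [ContinuousSMul ℝ E]

theorem isClosed_image_nonneg_of_linearIndependent [T2Space E] {ι : Type*} [Fintype ι]
    {v : ι → E} (hv : LinearIndependent ℝ v) :
    IsClosed (Fintype.linearCombination ℝ v '' Set.Ici 0) :=
  (LinearMap.isClosedEmbedding_of_injective (LinearMap.ker_eq_bot.2
    hv.fintypeLinearCombination_injective)).isClosedMap _ isClosed_Ici

/-- By Carathéodory, a finitely generated cone is a finite union of images of the closed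
orthant under injective linear maps. -/
theorem isClosed_coneHull [T2Space E] [FiniteDimensional ℝ E] {s : Set E} (hs : s.Finite) :
    IsClosed (coneHull s) := by
  have : Finite s := hs
  have hunion : coneHull s = ⋃ n ∈ Set.Iic (Module.finrank ℝ E), ⋃ (v : Fin n → s)
      (_ : LinearIndependent ℝ (Subtype.val ∘ v)),
      Fintype.linearCombination ℝ (Subtype.val ∘ v) '' Set.Ici 0 := by
    ext x
    simp only [Set.mem_iUnion, Set.mem_image, Set.mem_Ici, Fintype.linearCombination_apply]
    constructor
    · intro hx
      obtain ⟨n, c, v, hc, hvs, hli, rfl⟩ := exists_linearIndependent_of_mem_coneHull hx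
      exact ⟨n, by simpa using hli.fintype_card_le_finrank, fun i => ⟨v i, hvs i⟩, hli, c,
        hc, rfl⟩
    · rintro ⟨n, -, v, -, c, hc, rfl⟩
      exact ⟨n, c, _, hc, fun i => (v i).2, rfl⟩
  rw [hunion]
  exact (Set.finite_Iic _).isClosed_biUnion fun n _ => isClosed_iUnion_of_finite fun v =>
    isClosed_iUnion_of_finite isClosed_image_nonneg_of_linearIndependent

theorem exists_lt_neg_one_of_notMem [LocallyConvexSpace ℝ E] {K : Set E} (hconv : Convex ℝ K)
    (hclosed : IsClosed K) (h0 : 0 ∈ K) {x : E} (hx : x ∉ K) :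
    ∃ f : E →L[ℝ] ℝ, f x < -1 ∧ ∀ y ∈ K, -1 < f y := by
  obtain ⟨f, u, hfx, hfK⟩ := geometric_hahn_banach_point_closed hconv hclosed hx
  have hu : u < 0 := by simpa using hfK 0 h0
  refine ⟨(-u)⁻¹ • f, ?_, fun y hy => ?_⟩
  · rw [smul_apply, smul_eq_mul, inv_mul_lt_iff₀ (neg_pos.2 hu)]
    linarith
  · rw [smul_apply, smul_eq_mul, lt_inv_mul_iff₀ (neg_pos.2 hu)]
    linarith [hfK y hy]

end Topology

theorem nonneg_of_forall_neg_one_lt_mul {r : ℝ} (h : ∀ t, 0 ≤ t → -1 < t * r) : 0 ≤ r := by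
  by_contra! hr
  have := h (-r⁻¹) (by simpa using hr.le)
  rw [neg_mul, inv_mul_cancel₀ hr.ne] at this
  exact this.false

section Polar

variable {ι V : Type*}

variable (e : ι → V) (a : ι → ℝ) in
def polarRays : Set V := {x | ∃ i, a i = 0 ∧ x = e i}

theorem finite_polarRays [Finite ι] {e : ι → V} {a : ι → ℝ} : (polarRays e a).Finite :=
  (Set.finite_range e).subset <| by
    rintro _ ⟨i, -, rfl⟩
    exact ⟨i, rfl⟩

variable [AddCommGroup V] [Module ℝ V]

variable (e : ι → V) (a : ι → ℝ) in
def polarVertices : Set V := {0} ∪ {x | ∃ i, 0 < a i ∧ x = (a i)⁻¹ • e i}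

variable {e : ι → V} {a : ι → ℝ}

theorem finite_polarVertices [Finite ι] : (polarVertices e a).Finite :=
  (Set.finite_singleton 0).union <| (Set.finite_range fun i => (a i)⁻¹ • e i).subset <| by
    rintro _ ⟨i, -, rfl⟩
    exact ⟨i, rfl⟩

theorem neg_one_le_apply_of_mem_convexHull_polarVertices {m : V →ₗ[ℝ] ℝ}
    (hm : ∀ i, 0 ≤ m (e i) + a i) {p : V} (hp : p ∈ convexHull ℝ (polarVertices e a)) :
    -1 ≤ m p := by
  refine convexHull_min ?_ (convex_halfSpace_ge m.isLinear (-1)) hp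
  rintro _ (rfl | ⟨i, hai, rfl⟩)
  · simp
  · rw [Set.mem_ofPred_eq, map_smul, smul_eq_mul, le_inv_mul_iff₀ hai]
    linarith [hm i]

theorem apply_nonneg_of_mem_coneHull_polarRays {m : V →ₗ[ℝ] ℝ} (hm : ∀ i, 0 ≤ m (e i) + a i)
    {s : V} (hs : s ∈ coneHull (polarRays e a)) : 0 ≤ m s := by
  refine m.nonneg_of_mem_coneHull ?_ hs
  rintro _ ⟨i, hai, rfl⟩
  simpa [hai] using hm i

theorem add_nonneg_of_forall_neg_one_lt (ha : ∀ i, 0 ≤ a i) {f : V →ₗ[ℝ] ℝ}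
    (hf : ∀ y ∈ convexHull ℝ (polarVertices e a) + coneHull (polarRays e a), -1 < f y)
    (i : ι) : 0 ≤ f (e i) + a i := by
  rcases (ha i).eq_or_lt with hai | hai
  · rw [← hai, add_zero]
    refine nonneg_of_forall_neg_one_lt_mul fun t ht => ?_
    have := hf (0 + t • e i) (Set.add_mem_add (subset_convexHull ℝ _ (Or.inl rfl))
      (smul_mem_coneHull_of_mem ht ⟨i, hai.symm, rfl⟩))
    rwa [zero_add, map_smul, smul_eq_mul] at this
  · have := hf ((a i)⁻¹ • e i + 0) (Set.add_mem_add
      (subset_convexHull ℝ _ (Or.inr ⟨i, hai, rfl⟩)) (zero_mem_coneHull _))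
    rw [add_zero, map_smul, smul_eq_mul, lt_inv_mul_iff₀ hai] at this
    linarith

theorem mem_convexHull_add_coneHull_of_forall_neg_one_le [Finite ι] [FiniteDimensional ℝ V]
    (ha : ∀ i, 0 ≤ a i) {x : V}
    (hx : ∀ m : Module.Dual ℝ V, (∀ i, 0 ≤ m (e i) + a i) → -1 ≤ m x) :
    x ∈ convexHull ℝ (polarVertices e a) + coneHull (polarRays e a) := by
  -- Separation needs a topology; any norm on `V` will do.
  let φ := (Module.finBasis ℝ V).equivFun
  let : NormedAddCommGroup V := .induced V _ φ φ.injective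
  let : NormedSpace ℝ V := .induced ℝ V _ φ
  have h0 : (0 : V) ∈ convexHull ℝ (polarVertices e a) + coneHull (polarRays e a) := by
    simpa using Set.add_mem_add (subset_convexHull ℝ (polarVertices e a) (Or.inl rfl))
      (zero_mem_coneHull (polarRays e a))
  by_contra hxK
  obtain ⟨f, hfx, hfK⟩ := exists_lt_neg_one_of_notMem
    ((convex_convexHull ℝ _).add (convex_coneHull _))
    ((isClosed_coneHull finite_polarRays).add_left_of_isCompact
      (finite_polarVertices.isCompact_convexHull ℝ)) h0 hxK
  exact hfx.not_ge (hx f (add_nonneg_of_forall_neg_one_lt ha hfK))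

end Polar

/-- Let `N_ℝ` be a finite-dimensional real vector space with dual `M_ℝ`. Let
`e₁, …, e_k ∈ N_ℝ` and `a₁, …, a_k ≥ 0`. Define `□ = {m : ⟨m, e_i⟩ + a_i ≥ 0 ∀ i}` and
`U = {e : ⟨m, e⟩ ≥ -1 ∀ m ∈ □}`. Then
`U = conv({0} ∪ {e_i/a_i : a_i > 0}) + Σ_{a_i = 0} ℝ_{≥0} e_i`. -/
theorem stmt_10 {V : Type*} [AddCommGroup V] [Module ℝ V] [FiniteDimensional ℝ V]
    (k : ℕ) (e : Fin k → V) (a : Fin k → ℝ) (ha : ∀ i, 0 ≤ a i)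
    (box : Set (Module.Dual ℝ V))
    (hbox : box = {m | ∀ i, 0 ≤ m (e i) + a i})
    (U : Set V) (hU : U = {x | ∀ m ∈ box, -1 ≤ m x}) :
    U = {y | ∃ p ∈ convexHull ℝ
        ({0} ∪ {x | ∃ i, 0 < a i ∧ x = (a i)⁻¹ • e i} : Set V),
      ∃ s ∈ coneHull {x | ∃ i, a i = 0 ∧ x = e i}, y = p + s} := by
  subst hbox hU
  ext x
  constructor
  · intro hx
    obtain ⟨p, hp, s, hs, rfl⟩ := mem_convexHull_add_coneHull_of_forall_neg_one_le ha hx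
    exact ⟨p, hp, s, hs, rfl⟩
  · rintro ⟨p, hp, s, hs, rfl⟩ m hm
    rw [map_add]
    linarith [neg_one_le_apply_of_mem_convexHull_polarVertices hm hp,
      apply_nonneg_of_mem_coneHull_polarRays hm hs]
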